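/- arXiv:2404.15065 — 2 statements merged into one kernel-verified Lean document; each statement's English description precedes it below -/
import Mathlib

section
/- Let M₁ and M₂ be matrix polynomial zonotopes with h₁ and h₂ generator matrices respectively, sharing the same identifier vector. Then their dependency-preserving matrix product M₃ = {M₁(α)·M₂(α) : α ∈ [-1,1]^p} is a matrix polynomial zonotope with at most h₁ + h₂ + h₁·h₂ generator matrices. -/
open scoped BigOperators

/-- A matrix polynomial zonotope with h generator matrices. -/
def MatPolyZono {n m p h : ℕ} (C : Matrix (Fin n) (Fin m) ℝ)
    (G : Fin h → Matrix (Fin n) (Fin m) ℝ) (E : Fin h → Fin p → ℕ) :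
    Set (Matrix (Fin n) (Fin m) ℝ) :=
  { M | ∃ α : Fin p → ℝ, (∀ k, α k ∈ Set.Icc (-1:ℝ) 1) ∧
      M = C + ∑ i, (∏ k, α k ^ E i k) • G i }

/-!
Expanding `M₁(α) M₂(α)` by distributivity gives the constant `C₁ C₂` and the generators
`G₁ᵢ C₂`, `C₁ G₂ⱼ`, `G₁ᵢ G₂ⱼ`, whose coefficients are again monomials in `α`: those of the
factors, and the product monomial with exponent `E₁ᵢ + E₂ⱼ`. Since the same `α` parametrizes
both factors, the product set is exactly the polynomial zonotope of this expansion.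
-/

namespace PolyZono

variable {R σ ι ι₁ ι₂ : Type*} [CommRing R] [Fintype σ] [Fintype ι] [Fintype ι₁] [Fintype ι₂]
  {l n o : Type*} [Fintype n]

def monomial (α : σ → R) (e : σ → ℕ) : R := ∏ j, α j ^ e j

theorem monomial_add (α : σ → R) (e₁ e₂ : σ → ℕ) :
    monomial α (e₁ + e₂) = monomial α e₁ * monomial α e₂ := by
  simp only [monomial, Pi.add_apply, pow_add, Finset.prod_mul_distrib]

def eval (C : Matrix l o R) (G : ι → Matrix l o R) (E : ι → σ → ℕ) (α : σ → R) :
    Matrix l o R :=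
  C + ∑ i, monomial α (E i) • G i

theorem eval_comp_equiv {ι' : Type*} [Fintype ι'] (e : ι' ≃ ι) (C : Matrix l o R)
    (G : ι → Matrix l o R) (E : ι → σ → ℕ) (α : σ → R) :
    eval C (G ∘ e) (E ∘ e) α = eval C G E α := by
  simp only [eval, Function.comp_apply, Equiv.sum_comp e (fun i => monomial α (E i) • G i)]

def mulGenerators (C₁ : Matrix l n R) (G₁ : ι₁ → Matrix l n R) (C₂ : Matrix n o R)
    (G₂ : ι₂ → Matrix n o R) : (ι₁ ⊕ ι₂) ⊕ (ι₁ × ι₂) → Matrix l o R :=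
  Sum.elim (Sum.elim (fun i => G₁ i * C₂) (fun j => C₁ * G₂ j)) (fun ij => G₁ ij.1 * G₂ ij.2)

def mulExponents (E₁ : ι₁ → σ → ℕ) (E₂ : ι₂ → σ → ℕ) : (ι₁ ⊕ ι₂) ⊕ (ι₁ × ι₂) → σ → ℕ :=
  Sum.elim (Sum.elim E₁ E₂) (fun ij => E₁ ij.1 + E₂ ij.2)

theorem eval_mul (C₁ : Matrix l n R) (G₁ : ι₁ → Matrix l n R) (E₁ : ι₁ → σ → ℕ)
    (C₂ : Matrix n o R) (G₂ : ι₂ → Matrix n o R) (E₂ : ι₂ → σ → ℕ) (α : σ → R) :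
    eval C₁ G₁ E₁ α * eval C₂ G₂ E₂ α =
      eval (C₁ * C₂) (mulGenerators C₁ G₁ C₂ G₂) (mulExponents E₁ E₂) α := by
  simp only [eval, mulGenerators, mulExponents, Fintype.sum_sum_type, Fintype.sum_prod_type,
    Sum.elim_inl, Sum.elim_inr, monomial_add, Matrix.add_mul, Matrix.mul_add, Matrix.sum_mul,
    Matrix.mul_sum, Matrix.smul_mul, Matrix.mul_smul, smul_add, Finset.smul_sum, smul_smul,
    Finset.sum_add_distrib]
  rw [Finset.sum_comm (s := Finset.univ (α := ι₂))]
  simp only [mul_comm (monomial α (E₂ _))]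
  abel

end PolyZono

/-- The dependency-preserving product of two matrix polynomial zonotopes with
h₁ and h₂ generator matrices (shared identifier vector) is a matrix polynomial
zonotope with at most h₁ + h₂ + h₁·h₂ generator matrices. -/
theorem stmt_5 (n k m p h₁ h₂ : ℕ)
    (C₁ : Matrix (Fin n) (Fin k) ℝ) (G₁ : Fin h₁ → Matrix (Fin n) (Fin k) ℝ)
    (E₁ : Fin h₁ → Fin p → ℕ)
    (C₂ : Matrix (Fin k) (Fin m) ℝ) (G₂ : Fin h₂ → Matrix (Fin k) (Fin m) ℝ)
    (E₂ : Fin h₂ → Fin p → ℕ) :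
    ∃ (C : Matrix (Fin n) (Fin m) ℝ)
      (G : Fin (h₁ + h₂ + h₁ * h₂) → Matrix (Fin n) (Fin m) ℝ)
      (E : Fin (h₁ + h₂ + h₁ * h₂) → Fin p → ℕ),
      { M : Matrix (Fin n) (Fin m) ℝ | ∃ α : Fin p → ℝ,
          (∀ j, α j ∈ Set.Icc (-1:ℝ) 1) ∧
          M = (C₁ + ∑ i, (∏ j, α j ^ E₁ i j) • G₁ i) *
              (C₂ + ∑ i, (∏ j, α j ^ E₂ i j) • G₂ i) }
      = MatPolyZono C G E := by
  let e : Fin (h₁ + h₂ + h₁ * h₂) ≃ (Fin h₁ ⊕ Fin h₂) ⊕ (Fin h₁ × Fin h₂) :=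
    ((Equiv.sumCongr finSumFinEquiv finProdFinEquiv).trans finSumFinEquiv).symm
  refine ⟨C₁ * C₂, PolyZono.mulGenerators C₁ G₁ C₂ G₂ ∘ e, PolyZono.mulExponents E₁ E₂ ∘ e, ?_⟩
  ext M
  refine exists_congr fun α => and_congr_right fun _ => ?_
  change M = PolyZono.eval C₁ G₁ E₁ α * PolyZono.eval C₂ G₂ E₂ α ↔ M = PolyZono.eval _ _ _ α
  rw [PolyZono.eval_mul, PolyZono.eval_comp_equiv]
end

section
/- The quadratic map of two polynomial zonotopes with h₁ and h₂ generators respectively (with common identifier vector) yields a polynomial zonotope with O(h₁·h₂) generators; precisely, at most h₁ + h₂ + h₁·h₂ generators. -/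
/-! Expanding `B (c₁ + ∑ᵢ aᵢ G₁ᵢ) (c₂ + ∑ⱼ bⱼ G₂ⱼ)` for the bilinear map `B` of the quadratic map
gives the constant `B c₁ c₂` plus one term per `G₁ᵢ`, one per `G₂ⱼ` and one per pair `(i, j)`.
Because both zonotopes are driven by the same factors `α`, the coefficient `aᵢ bⱼ` of a mixed term
is again a monomial in `α`, with exponent vector `E₁ᵢ + E₂ⱼ`; so the image is a polynomial zonotope
with `h₁ + h₂ + h₁ h₂` generators. -/

open Matrix
open scoped BigOperators

/-- A polynomial zonotope in ℝⁿ with h generators. -/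
def PolyZono {n p h : ℕ} (c : Fin n → ℝ) (G : Fin h → Fin n → ℝ)
    (E : Fin h → Fin p → ℕ) : Set (Fin n → ℝ) :=
  { x | ∃ α : Fin p → ℝ, (∀ k, α k ∈ Set.Icc (-1:ℝ) 1) ∧
      x = c + ∑ i, (∏ k, α k ^ E i k) • G i }

section BilinearExpansion

variable {R M N P ι κ : Type*} [CommSemiring R] [AddCommMonoid M] [AddCommMonoid N]
  [AddCommMonoid P] [Module R M] [Module R N] [Module R P] [Fintype ι] [Fintype κ]

theorem LinearMap.map_add_sum_smul₂ (B : M →ₗ[R] N →ₗ[R] P) (x : M) (u : ι → M) (a : ι → R)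
    (y : N) (v : κ → N) (b : κ → R) :
    B (x + ∑ i, a i • u i) (y + ∑ j, b j • v j) =
      B x y + (∑ i, a i • B (u i) y + ∑ j, b j • B x (v j) +
        ∑ q : ι × κ, (a q.1 * b q.2) • B (u q.1) (v q.2)) := by
  simp only [map_add, map_sum, map_smul, LinearMap.add_apply, LinearMap.sum_apply,
    LinearMap.smul_apply, smul_add, Finset.smul_sum, smul_smul, Finset.sum_add_distrib,
    Fintype.sum_prod_type_right, mul_comm (b _)]
  abel

def quadGen (B : M →ₗ[R] N →ₗ[R] P) (c₁ : M) (G₁ : ι → M) (c₂ : N) (G₂ : κ → N) :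
    (ι ⊕ κ) ⊕ ι × κ → P :=
  Sum.elim (Sum.elim (fun i => B (G₁ i) c₂) (fun j => B c₁ (G₂ j)))
    (fun q => B (G₁ q.1) (G₂ q.2))

def quadExp {σ : Type*} (E₁ : ι → σ → ℕ) (E₂ : κ → σ → ℕ) : (ι ⊕ κ) ⊕ ι × κ → σ → ℕ :=
  Sum.elim (Sum.elim E₁ E₂) (fun q => E₁ q.1 + E₂ q.2)

theorem LinearMap.map_add_sum_monomial_smul₂ {σ : Type*} [Fintype σ] (B : M →ₗ[R] N →ₗ[R] P)
    (c₁ : M) (G₁ : ι → M) (E₁ : ι → σ → ℕ) (c₂ : N) (G₂ : κ → N) (E₂ : κ → σ → ℕ)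
    (α : σ → R) :
    B (c₁ + ∑ i, (∏ k, α k ^ E₁ i k) • G₁ i) (c₂ + ∑ j, (∏ k, α k ^ E₂ j k) • G₂ j) =
      B c₁ c₂ + ∑ t, (∏ k, α k ^ quadExp E₁ E₂ t k) • quadGen B c₁ G₁ c₂ G₂ t := by
  simp only [B.map_add_sum_smul₂, Fintype.sum_sum_type, quadExp, quadGen, Sum.elim_inl,
    Sum.elim_inr, Pi.add_apply, pow_add, Finset.prod_mul_distrib]

end BilinearExpansion

def quadMap {R m ι : Type*} [CommSemiring R] [Fintype m] (Q : ι → Matrix m m R) :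
    (m → R) →ₗ[R] (m → R) →ₗ[R] (ι → R) :=
  LinearMap.mk₂ R (fun x y d => x ⬝ᵥ Q d *ᵥ y)
    (fun _ _ _ => funext fun _ => add_dotProduct _ _ _)
    (fun _ _ _ => funext fun _ => smul_dotProduct _ _ _)
    (fun _ _ _ => funext fun _ => by simp only [mulVec_add, dotProduct_add, Pi.add_apply])
    (fun _ _ _ => funext fun _ => by simp only [mulVec_smul, dotProduct_smul, Pi.smul_apply])

/-- The quadratic map of two polynomial zonotopes with h₁ and h₂ generators
(common identifier vector) is a polynomial zonotope with at most
h₁ + h₂ + h₁·h₂ generators. -/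
theorem stmt_7 (n nb p h₁ h₂ : ℕ) (Q : Fin nb → Matrix (Fin n) (Fin n) ℝ)
    (c₁ : Fin n → ℝ) (G₁ : Fin h₁ → Fin n → ℝ) (E₁ : Fin h₁ → Fin p → ℕ)
    (c₂ : Fin n → ℝ) (G₂ : Fin h₂ → Fin n → ℝ) (E₂ : Fin h₂ → Fin p → ℕ) :
    ∃ (c : Fin nb → ℝ) (G : Fin (h₁ + h₂ + h₁ * h₂) → Fin nb → ℝ)
      (E : Fin (h₁ + h₂ + h₁ * h₂) → Fin p → ℕ),
      { y : Fin nb → ℝ | ∃ α : Fin p → ℝ, (∀ k, α k ∈ Set.Icc (-1:ℝ) 1) ∧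
          y = fun d => (c₁ + ∑ i, (∏ k, α k ^ E₁ i k) • G₁ i) ⬝ᵥ
              (Q d).mulVec (c₂ + ∑ i, (∏ k, α k ^ E₂ i k) • G₂ i) }
      = PolyZono c G E := by
  let e : (Fin h₁ ⊕ Fin h₂) ⊕ Fin h₁ × Fin h₂ ≃ Fin (h₁ + h₂ + h₁ * h₂) :=
    (Equiv.sumCongr finSumFinEquiv finProdFinEquiv).trans finSumFinEquiv
  refine ⟨quadMap Q c₁ c₂, quadGen (quadMap Q) c₁ G₁ c₂ G₂ ∘ e.symm,
    quadExp E₁ E₂ ∘ e.symm, ?_⟩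
  ext y
  refine exists_congr fun α => and_congr_right fun _ => ?_
  have expand := (quadMap Q).map_add_sum_monomial_smul₂ c₁ G₁ E₁ c₂ G₂ E₂ α
  rw [← e.symm.sum_comp] at expand
  exact Eq.congr_right expand
end
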